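/- In the bipyramid BP_n with n odd (with its unique z-orientation up to reversal), every edge of the form ai or bi (apex to base) is of type I, every base edge i(i+1) is of type II, the apexes a and b are vertices of type I, all base vertices are of type II, and all faces are of type I. -/

import Mathlib

open scoped Classical

noncomputable section

/-- An abstract (combinatorial) triangulation of a closed surface:
finitely many vertices, edges and faces; every edge has two endpoints,
every face has three sides, and every edge lies on exactly two faces. -/
structure Triang where
  V : Type
  E : Type
  F : Type
  [fV : Fintype V]
  [fE : Fintype E]
  [fF : Fintype F]
  [dV : DecidableEq V]
  [dE : DecidableEq E]
  [dF : DecidableEq F]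
  ends : E → Finset V
  ends_card : ∀ e, (ends e).card = 2
  sides : F → Finset E
  sides_card : ∀ f, (sides f).card = 3
  two_faces : ∀ e, (Finset.univ.filter fun f => e ∈ sides f).card = 2

attribute [instance] Triang.fV Triang.fE Triang.fF Triang.dV Triang.dE Triang.dF

/-- A zigzag, presented as a periodic bi-infinite sequence of directed edge
traversals (edge, tail, head) together with the face carrying each
consecutive pair, of minimal period `n`. -/
structure Zigzag (T : Triang) where
  n : ℕ
  npos : 0 < n
  edge : ℤ → T.E
  tail : ℤ → T.V
  head : ℤ → T.V
  face : ℤ → T.F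
  per_edge : ∀ i, edge (i + n) = edge i
  per_tail : ∀ i, tail (i + n) = tail i
  per_head : ∀ i, head (i + n) = head i
  per_face : ∀ i, face (i + n) = face i
  mem_tail : ∀ i, tail i ∈ T.ends (edge i)
  mem_head : ∀ i, head i ∈ T.ends (edge i)
  tail_ne_head : ∀ i, tail i ≠ head i
  link : ∀ i, head i = tail (i + 1)
  edge_mem : ∀ i, edge i ∈ T.sides (face i)
  edge_succ_mem : ∀ i, edge (i + 1) ∈ T.sides (face i)
  edge_ne_succ : ∀ i, edge i ≠ edge (i + 1)
  face_ne_succ : ∀ i, face i ≠ face (i + 1)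
  disjoint_two : ∀ i, T.ends (edge i) ∩ T.ends (edge (i + 2)) = ∅
  minimal : ∀ m : ℕ, 0 < m → (∀ i, edge (i + m) = edge i) → n ≤ m

variable {T : Triang}

/-- Number of occurrences of an edge in one period of a zigzag. -/
def Zigzag.count (Z : Zigzag T) (e : T.E) : ℕ :=
  ((Finset.range Z.n).filter fun i => Z.edge i = e).card

/-- Two zigzags are equal as cyclic sequences (equal up to a shift). -/
def CyclicEq (Z Z' : Zigzag T) : Prop :=
  ∃ k : ℤ, (∀ i, Z'.edge i = Z.edge (i + k)) ∧ (∀ i, Z'.tail i = Z.tail (i + k)) ∧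
    (∀ i, Z'.head i = Z.head (i + k))

/-- `Z'` is the reversal of `Z` (as cyclic sequences, i.e. up to a shift). -/
def IsReversal (Z Z' : Zigzag T) : Prop :=
  ∃ k : ℤ, (∀ i, Z'.edge i = Z.edge (k - i)) ∧ (∀ i, Z'.tail i = Z.head (k - i)) ∧
    (∀ i, Z'.head i = Z.tail (k - i))

/-- A z-orientation: a collection of zigzags which double covers the edges
(each edge is traversed exactly twice in total). -/
structure ZOrientation (T : Triang) where
  zz : List (Zigzag T)
  covers : ∀ e : T.E, (zz.map fun Z => Z.count e).sum = 2

/-- The multiset of directed traversals of an edge by the zigzags of `τ`. -/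
def ZOrientation.travs (τ : ZOrientation T) (e : T.E) : Multiset (T.V × T.V) :=
  (τ.zz.map fun Z =>
    Multiset.ofList
      (((List.range Z.n).filter fun i => Z.edge i = e).map
        fun i => (Z.tail i, Z.head i))).sum

/-- Type II edge: the two traversals from `τ` go in the same direction. -/
def ZOrientation.TypeII (τ : ZOrientation T) (e : T.E) : Prop :=
  ∃ v w : T.V, τ.travs e = {(v, w), (v, w)}

/-- Type I edge: the two traversals from `τ` go in different directions. -/
def ZOrientation.TypeI (τ : ZOrientation T) (e : T.E) : Prop :=
  ∃ v w : T.V, τ.travs e = {(v, w), (w, v)} ∧ v ≠ w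

/-- The direction of a type II edge: both traversals go from `v` to `w`. -/
def ZOrientation.DirII (τ : ZOrientation T) (e : T.E) (v w : T.V) : Prop :=
  τ.travs e = {(v, w), (v, w)}

/-- Face of type I: exactly one side of type II (and every side has a type). -/
def ZOrientation.FaceTypeI (τ : ZOrientation T) (f : T.F) : Prop :=
  ((T.sides f).filter fun e => τ.TypeII e).card = 1 ∧
    ∀ e ∈ T.sides f, τ.TypeI e ∨ τ.TypeII e

/-- Face of type II: all three sides of type II. -/
def ZOrientation.FaceTypeII (τ : ZOrientation T) (f : T.F) : Prop :=
  ∀ e ∈ T.sides f, τ.TypeII e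

/-- Vertex of type I: incident only to edges of type I. -/
def ZOrientation.VertexTypeI (τ : ZOrientation T) (v : T.V) : Prop :=
  ∀ e : T.E, v ∈ T.ends e → τ.TypeI e

/-- A zigzag is homogeneous: after each type II edge there follow exactly
two type I edges before the next type II edge, and type II edges occur. -/
def ZOrientation.Homogeneous (τ : ZOrientation T) (Z : Zigzag T) : Prop :=
  (∃ i : ℤ, τ.TypeII (Z.edge i)) ∧
    ∀ i : ℤ, τ.TypeII (Z.edge i) →
      τ.TypeI (Z.edge (i + 1)) ∧ τ.TypeI (Z.edge (i + 2)) ∧ τ.TypeII (Z.edge (i + 3))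

/-- Vertices of a face. -/
def faceVerts (T : Triang) (f : T.F) : Finset T.V :=
  (T.sides f).biUnion T.ends

/-- The edges of the link cycle `C(v)`: in each face containing `v`,
the edge opposite to `v`. -/
def oppEdges (T : Triang) (v : T.V) : Finset T.E :=
  Finset.univ.filter fun e =>
    ∃ f : T.F, e ∈ T.sides f ∧ v ∈ faceVerts T f ∧ v ∉ T.ends e

/-- A finite edge set forms a single directed cycle with respect to the
τ-directions of its (type II) edges. -/
def ZOrientation.IsDirCycle (τ : ZOrientation T) (S : Finset T.E) : Prop :=
  ∃ (m : ℕ) (c : ℤ → T.E) (w : ℤ → T.V), 0 < m ∧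
    (∀ i, c (i + m) = c i) ∧ (∀ i, w (i + m) = w i) ∧
    (∀ i j : ℤ, 0 ≤ i → i < j → j < m → c i ≠ c j) ∧
    (∀ e ∈ S, ∃ i : ℤ, c i = e) ∧ (∀ i, c i ∈ S) ∧
    (∀ i, τ.DirII (c i) (w i) (w (i + 1)))

/-- A realization of the `n`-gonal bipyramid `BP_n` as a triangulation:
base vertices `base i` (`i : ZMod n`), apexes `apex 0, apex 1`,
base edges `be i` joining `base i, base (i+1)`, lateral edges `ae a i`
joining `apex a, base i`, and faces `fc a i` with sides `be i, ae a i, ae a (i+1)`. -/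
structure Bipyramid (T : Triang) (n : ℕ) where
  base : ZMod n → T.V
  apex : Fin 2 → T.V
  be : ZMod n → T.E
  ae : Fin 2 → ZMod n → T.E
  fc : Fin 2 → ZMod n → T.F
  base_inj : Function.Injective base
  apex_inj : Function.Injective apex
  apex_ne_base : ∀ a i, apex a ≠ base i
  edge_inj : Function.Injective
    (Sum.elim be (fun p : Fin 2 × ZMod n => ae p.1 p.2))
  edge_surj : ∀ e : T.E, (∃ i, e = be i) ∨ ∃ a i, e = ae a i
  face_inj : Function.Injective (fun p : Fin 2 × ZMod n => fc p.1 p.2)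
  face_surj : ∀ f : T.F, ∃ a i, f = fc a i
  vert_surj : ∀ v : T.V, (∃ i, v = base i) ∨ ∃ a, v = apex a
  ends_be : ∀ i, T.ends (be i) = {base i, base (i + 1)}
  ends_ae : ∀ a i, T.ends (ae a i) = {apex a, base i}
  sides_fc : ∀ a i, T.sides (fc a i) = {be i, ae a i, ae a (i + 1)}

namespace Bipyramid
variable {T : Triang} {n : ℕ} (B : Bipyramid T n)

lemma be_ne_ae (i : ZMod n) (a : Fin 2) (j : ZMod n) : B.be i ≠ B.ae a j := by
  intro h
  have := B.edge_inj (a₁ := Sum.inl i) (a₂ := Sum.inr (a, j)) h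
  simp at this

lemma be_injective : Function.Injective B.be := by
  intro i j h
  have := B.edge_inj (a₁ := Sum.inl i) (a₂ := Sum.inl j) h
  simpa using this

lemma ae_inj {a b : Fin 2} {i j : ZMod n} (h : B.ae a i = B.ae b j) : a = b ∧ i = j := by
  have := B.edge_inj (a₁ := Sum.inr (a, i)) (a₂ := Sum.inr (b, j)) h
  simpa [Prod.ext_iff] using this

lemma mem_sides {e : T.E} {a : Fin 2} {s : ZMod n} :
    e ∈ T.sides (B.fc a s) ↔ e = B.be s ∨ e = B.ae a s ∨ e = B.ae a (s + 1) := by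
  rw [B.sides_fc]; simp

lemma fc_inj {a b : Fin 2} {i j : ZMod n} (h : B.fc a i = B.fc b j) : a = b ∧ i = j := by
  have := B.face_inj (a₁ := (a, i)) (a₂ := (b, j)) h
  simpa [Prod.ext_iff] using this

lemma face_of_be {k : ZMod n} {f : T.F} (h : B.be k ∈ T.sides f) : ∃ c, f = B.fc c k := by
  obtain ⟨c, s, rfl⟩ := B.face_surj f
  rw [B.mem_sides] at h
  rcases h with h | h | h
  · exact ⟨c, by rw [B.be_injective h]⟩
  · exact absurd h (B.be_ne_ae _ _ _)
  · exact absurd h (B.be_ne_ae _ _ _)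

lemma face_of_ae {b : Fin 2} {t : ZMod n} {f : T.F} (h : B.ae b t ∈ T.sides f) :
    f = B.fc b t ∨ f = B.fc b (t - 1) := by
  obtain ⟨c, s, rfl⟩ := B.face_surj f
  rw [B.mem_sides] at h
  rcases h with h | h | h
  · exact absurd h.symm (B.be_ne_ae _ _ _)
  · obtain ⟨rfl, rfl⟩ := B.ae_inj h
    exact Or.inl rfl
  · obtain ⟨rfl, h2⟩ := B.ae_inj h
    refine Or.inr ?_
    have : s = t - 1 := by linear_combination -h2
    rw [this]

/-- Reflected bipyramid structure. -/
def flip : Bipyramid T n where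
  base i := B.base (-i)
  apex := B.apex
  be i := B.be (-i - 1)
  ae a i := B.ae a (-i)
  fc a i := B.fc a (-i - 1)
  base_inj := fun i j h => by
    have := B.base_inj h; exact neg_injective this
  apex_inj := B.apex_inj
  apex_ne_base := fun a i => B.apex_ne_base a (-i)
  edge_inj := by
    rintro (i | ⟨a, i⟩) (j | ⟨b, j⟩) h <;> simp only [Sum.elim_inl, Sum.elim_inr] at h
    · have := B.be_injective h
      have : i = j := by linear_combination -this
      rw [this]
    · exact absurd h (B.be_ne_ae _ _ _)
    · exact absurd h.symm (B.be_ne_ae _ _ _)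
    · obtain ⟨rfl, h2⟩ := B.ae_inj h
      have : i = j := by linear_combination -h2
      rw [this]
  edge_surj := by
    intro e
    rcases B.edge_surj e with ⟨i, rfl⟩ | ⟨a, i, rfl⟩
    · exact Or.inl ⟨-i - 1, by congr 1; ring⟩
    · exact Or.inr ⟨a, -i, by congr 1; ring⟩
  face_inj := by
    rintro ⟨a, i⟩ ⟨b, j⟩ h
    simp only at h
    obtain ⟨rfl, h2⟩ := B.fc_inj h
    have : i = j := by linear_combination -h2
    rw [this]
  face_surj := by
    intro f
    obtain ⟨a, i, rfl⟩ := B.face_surj f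
    exact ⟨a, -i - 1, by congr 1; ring⟩
  vert_surj := by
    intro v
    rcases B.vert_surj v with ⟨i, rfl⟩ | ⟨a, rfl⟩
    · exact Or.inl ⟨-i, by congr 1; ring⟩
    · exact Or.inr ⟨a, rfl⟩
  ends_be := by
    intro i
    show T.ends (B.be (-i - 1)) = {B.base (-i), B.base (-(i + 1))}
    rw [B.ends_be (-i - 1)]
    have h1 : -i - 1 + 1 = -i := by ring
    have h2 : -(i + 1) = -i - 1 := by ring
    rw [h1, h2, Finset.pair_comm]
  ends_ae := fun a i => B.ends_ae a (-i)
  sides_fc := by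
    intro a i
    show T.sides (B.fc a (-i - 1)) = {B.be (-i - 1), B.ae a (-i), B.ae a (-(i + 1))}
    rw [B.sides_fc a (-i - 1)]
    have h1 : -i - 1 + 1 = -i := by ring
    have h2 : -(i + 1) = -i - 1 := by ring
    rw [h1, h2]
    ext e
    simp only [Finset.mem_insert, Finset.mem_singleton]
    tauto

lemma flip_be (k : ZMod n) : B.flip.be (-k - 1) = B.be k := by
  show B.be (-(-k - 1) - 1) = B.be k
  congr 1; ring

lemma flip_ae (a : Fin 2) (k : ZMod n) : B.flip.ae a (-k) = B.ae a k := by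
  show B.ae a (-(-k)) = B.ae a k
  congr 1; ring

end Bipyramid
section Helpers
variable {T : Triang}

lemma per_mul {α : Type*} (N : ℕ) (f : ℤ → α) (hf : ∀ i, f (i + N) = f i) :
    ∀ (c : ℤ) (j : ℤ), f (j + c * N) = f j := by
  intro c
  induction c using Int.induction_on with
  | zero => intro j; simp
  | succ c ih =>
    intro j
    have h1 : j + (c + 1 : ℤ) * N = (j + c * N) + N := by ring
    rw [h1, hf, ih]
  | pred c ih =>
    intro j
    have h1 : j + (-c - 1 : ℤ) * N = (j + (-c) * N) - N := by ring
    have h2 := hf ((j + (-c) * N) - N)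
    have h3 : (j + (-c) * N) - N + N = j + (-c) * N := by ring
    rw [h3] at h2
    rw [h1, ← h2, ih]

lemma per_emod {α : Type*} (N : ℕ) (f : ℤ → α) (hf : ∀ i, f (i + N) = f i) (j : ℤ) :
    f (j % (N : ℤ)) = f j := by
  have h1 : j % (N : ℤ) = j + (-(j / N)) * N := by rw [Int.emod_def]; ring
  rw [h1, per_mul N f hf]

lemma pair_le_of_mem {α : Type*} {s : Multiset α} {x y : α}
    (hx : x ∈ s) (hy : y ∈ s) (hxy : x ≠ y) : ({x, y} : Multiset α) ≤ s := by
  classical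
  rw [Multiset.le_iff_count]
  intro b
  by_cases hbx : b = x
  · subst hbx
    have : Multiset.count b ({b, y} : Multiset α) = 1 := by
      simp [Multiset.count_cons, hxy]
    rw [this]
    exact (Multiset.one_le_count_iff_mem).2 hx
  · by_cases hby : b = y
    · subst hby
      have : Multiset.count b ({x, b} : Multiset α) = 1 := by
        simp [Multiset.count_cons, Multiset.count_singleton, Ne.symm hbx]
      rw [this]
      exact (Multiset.one_le_count_iff_mem).2 hy
    · have : Multiset.count b ({x, y} : Multiset α) = 0 := by
        simp [Multiset.count_cons, Multiset.count_singleton, hbx, hby]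
      rw [this]
      exact Nat.zero_le _

lemma mem_le_list_sum {α : Type*} {l : List (Multiset α)} {x : Multiset α} (hx : x ∈ l) :
    x ≤ l.sum := by
  induction l with
  | nil => simp at hx
  | cons a l ih =>
    rcases List.mem_cons.1 hx with rfl | hx
    · simp only [List.sum_cons]; exact Multiset.le_add_right _ _
    · calc x ≤ l.sum := ih hx
        _ ≤ a + l.sum := Multiset.le_add_left _ _
        _ = (a :: l).sum := by simp

lemma card_list_sum {α : Type*} (l : List (Multiset α)) :
    Multiset.card l.sum = (l.map Multiset.card).sum := by
  induction l with
  | nil => simp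
  | cons a l ih => simp [ih]

lemma length_filter_range (N : ℕ) (p : ℕ → Prop) [DecidablePred p] :
    ((List.range N).filter (fun i => decide (p i))).length = ((Finset.range N).filter p).card := by
  induction N with
  | zero => simp
  | succ N ih =>
    rw [Finset.range_add_one, List.range_succ, Finset.filter_insert, List.filter_append]
    by_cases h : p N
    · rw [if_pos h, Finset.card_insert_of_notMem (by simp)]
      simp [h, ih]
    · rw [if_neg h]
      simp [h, ih]

lemma card_filter_cast (N : ℕ) (p : ℤ → Prop) [DecidablePred p] :
    ((do let a ← Finset.range N; pure ((a:ℤ)) : Finset ℤ).filter p).card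
      = ((Finset.range N).filter (fun i : ℕ => p i)).card := by
  have h : (do let a ← Finset.range N; pure ((a:ℤ)) : Finset ℤ)
      = (Finset.range N).image (fun a : ℕ => (a : ℤ)) := by
    ext x
    simp [Finset.bind_def, Finset.mem_sup, Finset.pure_def]
  rw [h, Finset.filter_image,
    Finset.card_image_of_injective _ (fun a b h => by exact_mod_cast h)]

lemma len_count (Z : Zigzag T) (e : T.E) :
    (((List.range Z.n).filter fun i : ℕ => Z.edge (↑i) = e)).length = Z.count e := by
  rw [Zigzag.count]
  exact (length_filter_range Z.n (fun i => Z.edge (↑i) = e)).trans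
    (card_filter_cast Z.n (fun i => Z.edge i = e)).symm

lemma travs_card (τ : ZOrientation T) (e : T.E) : Multiset.card (τ.travs e) = 2 := by
  rw [ZOrientation.travs, card_list_sum, List.map_map]
  rw [← τ.covers e]
  congr 1
  apply List.map_congr_left
  intro Z _
  simp only [Function.comp_apply, Multiset.coe_card, List.length_map]
  exact len_count Z e

end Helpers
section Travs
variable {T : Triang}

lemma travs_eq (τ : ZOrientation T) {Z : Zigzag T} (hZ : Z ∈ τ.zz) (e : T.E)
    (j1 j2 : ℤ) (hj : j1 % (Z.n : ℤ) ≠ j2 % (Z.n : ℤ))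
    (h1 : Z.edge j1 = e) (h2 : Z.edge j2 = e) :
    τ.travs e = {(Z.tail j1, Z.head j1), (Z.tail j2, Z.head j2)} := by
  have hNpos : (0 : ℤ) < (Z.n : ℤ) := by exact_mod_cast Z.npos
  set r1 : ℕ := (j1 % (Z.n : ℤ)).toNat with hr1
  set r2 : ℕ := (j2 % (Z.n : ℤ)).toNat with hr2
  have hc1 : (r1 : ℤ) = j1 % (Z.n : ℤ) := Int.toNat_of_nonneg (Int.emod_nonneg _ (by omega))
  have hc2 : (r2 : ℤ) = j2 % (Z.n : ℤ) := Int.toNat_of_nonneg (Int.emod_nonneg _ (by omega))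
  have hlt1 : r1 < Z.n := by
    have := Int.emod_lt_of_pos j1 hNpos; omega
  have hlt2 : r2 < Z.n := by
    have := Int.emod_lt_of_pos j2 hNpos; omega
  have hne : r1 ≠ r2 := by
    intro h; apply hj; rw [← hc1, ← hc2, h]
  have he1 : Z.edge r1 = e := by rw [hc1, per_emod Z.n Z.edge Z.per_edge]; exact h1
  have he2 : Z.edge r2 = e := by rw [hc2, per_emod Z.n Z.edge Z.per_edge]; exact h2
  have ht1 : Z.tail r1 = Z.tail j1 := by rw [hc1, per_emod Z.n Z.tail Z.per_tail]
  have ht2 : Z.tail r2 = Z.tail j2 := by rw [hc2, per_emod Z.n Z.tail Z.per_tail]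
  have hh1 : Z.head r1 = Z.head j1 := by rw [hc1, per_emod Z.n Z.head Z.per_head]
  have hh2 : Z.head r2 = Z.head j2 := by rw [hc2, per_emod Z.n Z.head Z.per_head]
  -- the pair of traversals is ≤ Z's contribution
  have hmem1 : r1 ∈ (List.range Z.n).filter fun i : ℕ => Z.edge (↑i) = e := by
    simp only [List.mem_filter, List.mem_range, decide_eq_true_eq]
    exact ⟨hlt1, he1⟩
  have hmem2 : r2 ∈ (List.range Z.n).filter fun i : ℕ => Z.edge (↑i) = e := by
    simp only [List.mem_filter, List.mem_range, decide_eq_true_eq]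
    exact ⟨hlt2, he2⟩
  have hpair : ({r1, r2} : Multiset ℕ)
      ≤ (((List.range Z.n).filter fun i : ℕ => Z.edge (↑i) = e) : Multiset ℕ) :=
    pair_le_of_mem (by exact_mod_cast hmem1) (by exact_mod_cast hmem2) hne
  have hmap := Multiset.map_le_map (f := fun i : ℕ => (Z.tail i, Z.head i)) hpair
  have hsub : ({(Z.tail j1, Z.head j1), (Z.tail j2, Z.head j2)} : Multiset (T.V × T.V))
      ≤ τ.travs e := by
    have hzle : (Multiset.ofList
        ((((List.range Z.n).filter fun i : ℕ => Z.edge (↑i) = e)).map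
          fun i : ℕ => (Z.tail i, Z.head i))) ≤ τ.travs e := by
      apply mem_le_list_sum
      exact List.mem_map.2 ⟨Z, hZ, rfl⟩
    refine le_trans ?_ hzle
    have : Multiset.map (fun i : ℕ => (Z.tail i, Z.head i)) ({r1, r2} : Multiset ℕ)
        = {(Z.tail j1, Z.head j1), (Z.tail j2, Z.head j2)} := by
      simp [ht1, ht2, hh1, hh2]
    rw [← this]
    refine le_trans hmap ?_
    rw [← Multiset.map_coe]
  exact (Multiset.eq_of_le_of_card_le hsub (by rw [travs_card]; simp)).symm

lemma typeI_not_typeII {τ : ZOrientation T} {e : T.E}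
    (h1 : τ.TypeI e) (h2 : τ.TypeII e) : False := by
  obtain ⟨v, w, hvw, hne⟩ := h1
  obtain ⟨x, y, hxy⟩ := h2
  rw [hvw] at hxy
  have m1 : (v, w) ∈ ({(x, y), (x, y)} : Multiset (T.V × T.V)) := by
    rw [← hxy]; simp
  have m2 : (w, v) ∈ ({(x, y), (x, y)} : Multiset (T.V × T.V)) := by
    rw [← hxy]; simp
  simp only [Multiset.insert_eq_cons, Multiset.mem_cons, Multiset.mem_singleton] at m1 m2
  have e1 : (v, w) = (x, y) := by tauto
  have e2 : (w, v) = (x, y) := by tauto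
  rw [← e2] at e1
  exact hne (by simpa using congrArg Prod.fst e1)

end Travs
lemma fin2_sub_sub : ∀ a : Fin 2, 1 - (1 - a) = a := by decide
lemma fin2_eq_one_sub : ∀ c a : Fin 2, c ≠ a → c = 1 - a := by decide
lemma fin2_one_sub_ne : ∀ a : Fin 2, 1 - a ≠ a := by decide

section Forcing
variable {T : Triang} {n : ℕ} {B : Bipyramid T n} {Z : Zigzag T}

lemma not_shared {i j : ℤ} (hij : i + 2 = j) (v : T.V)
    (h1 : v ∈ T.ends (Z.edge i)) (h2 : v ∈ T.ends (Z.edge j)) : False := by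
  subst hij
  have h := Z.disjoint_two i
  have hv : v ∈ T.ends (Z.edge i) ∩ T.ends (Z.edge (i + 2)) := Finset.mem_inter.2 ⟨h1, h2⟩
  rw [h] at hv
  exact absurd hv (Finset.notMem_empty v)

lemma apex_mem_ae (a : Fin 2) (t : ZMod n) : B.apex a ∈ T.ends (B.ae a t) := by
  rw [B.ends_ae]; simp

lemma base_mem_ae (a : Fin 2) (t : ZMod n) : B.base t ∈ T.ends (B.ae a t) := by
  rw [B.ends_ae]; simp

lemma base_mem_be_left (k : ZMod n) : B.base k ∈ T.ends (B.be k) := by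
  rw [B.ends_be]; simp

lemma base_mem_be_right (k : ZMod n) : B.base (k + 1) ∈ T.ends (B.be k) := by
  rw [B.ends_be]; simp

lemma head_tail (Z : Zigzag T) {j : ℤ} {x y : T.V} (hxy : x ≠ y)
    (he : T.ends (Z.edge j) = {x, y}) (hy : y ∈ T.ends (Z.edge (j + 1)))
    (hx : x ∉ T.ends (Z.edge (j + 1))) : Z.tail j = x ∧ Z.head j = y := by
  have hh : Z.head j ∈ T.ends (Z.edge (j + 1)) := by rw [Z.link]; exact Z.mem_tail (j + 1)
  have hh2 : Z.head j ∈ ({x, y} : Finset T.V) := by rw [← he]; exact Z.mem_head j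
  simp only [Finset.mem_insert, Finset.mem_singleton] at hh2
  have hhy : Z.head j = y := by
    rcases hh2 with h | h
    · exact absurd (h ▸ hh) hx
    · exact h
  have ht : Z.tail j ∈ ({x, y} : Finset T.V) := by rw [← he]; exact Z.mem_tail j
  simp only [Finset.mem_insert, Finset.mem_singleton] at ht
  rcases ht with h | h
  · exact ⟨h, hhy⟩
  · exact absurd (h.trans hhy.symm) (Z.tail_ne_head j)

variable (h3 : 3 ≤ n)
include h3

lemma zm1 : (1 : ZMod n) ≠ 0 := by
  haveI : Fact (1 < n) := ⟨by omega⟩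
  exact one_ne_zero

lemma face_at {i : ℤ} {k : ZMod n} {a : Fin 2}
    (h0 : Z.edge i = B.be k) (h1 : Z.edge (i + 1) = B.ae a (k + 1)) :
    Z.face i = B.fc a k := by
  have hm := Z.edge_mem i
  rw [h0] at hm
  obtain ⟨c, hc⟩ := B.face_of_be hm
  have hm1 := Z.edge_succ_mem i
  rw [h1, hc, B.mem_sides] at hm1
  rcases hm1 with h | h | h
  · exact absurd h.symm (B.be_ne_ae _ _ _)
  · exact absurd (B.ae_inj h).2 (fun h2 => zm1 h3 (by linear_combination h2))
  · rw [hc, (B.ae_inj h).1]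

lemma stepF {i : ℤ} {k : ZMod n} {a : Fin 2}
    (h0 : Z.edge i = B.be k) (h1 : Z.edge (i + 1) = B.ae a (k + 1)) :
    Z.edge (i + 2) = B.ae a (k + 2) ∧ Z.edge (i + 3) = B.be (k + 2) ∧
      Z.edge (i + 4) = B.ae (1 - a) (k + 3) := by
  have e12 : i + 1 + 1 = i + 2 := by ring
  have e23 : i + 2 + 1 = i + 3 := by ring
  have e34 : i + 3 + 1 = i + 4 := by ring
  have hfi : Z.face i = B.fc a k := face_at h3 h0 h1
  have hfi1 : Z.face (i + 1) = B.fc a (k + 1) := by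
    have hm := Z.edge_mem (i + 1)
    rw [h1] at hm
    rcases B.face_of_ae hm with h | h
    · exact h
    · exfalso
      have hk : k + 1 - 1 = k := by ring
      rw [hk, ← hfi] at h
      exact Z.face_ne_succ i h.symm
  have ha2 : Z.edge (i + 2) = B.ae a (k + 2) := by
    have hm := Z.edge_succ_mem (i + 1)
    rw [e12, hfi1, B.mem_sides] at hm
    rcases hm with h | h | h
    · exact (not_shared (by ring : i + 2 = i + 2) (B.base (k + 1))
        (by rw [h0]; exact base_mem_be_right k) (by rw [h]; exact base_mem_be_left (k + 1))).elim
    · exfalso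
      have hne := Z.edge_ne_succ (i + 1)
      rw [e12, h1, h] at hne
      exact hne rfl
    · rw [h]; congr 1; ring
  have hfi2 : Z.face (i + 2) = B.fc a (k + 2) := by
    have hm := Z.edge_mem (i + 2)
    rw [ha2] at hm
    rcases B.face_of_ae hm with h | h
    · exact h
    · exfalso
      have hk : k + 2 - 1 = k + 1 := by ring
      rw [hk, ← hfi1] at h
      exact Z.face_ne_succ (i + 1) (by rw [e12, h])
  have hb3 : Z.edge (i + 3) = B.be (k + 2) := by
    have hm := Z.edge_succ_mem (i + 2)
    rw [e23, hfi2, B.mem_sides] at hm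
    rcases hm with h | h | h
    · exact h
    · exfalso
      have hne := Z.edge_ne_succ (i + 2)
      rw [e23, ha2, h] at hne
      exact hne rfl
    · exact (not_shared (by ring : i + 1 + 2 = i + 3) (B.apex a)
        (by rw [h1]; exact apex_mem_ae a (k + 1)) (by rw [h]; exact apex_mem_ae a (k + 2 + 1))).elim
  obtain ⟨c, hfc⟩ := B.face_of_be (show B.be (k + 2) ∈ T.sides (Z.face (i + 3)) by
    rw [← hb3]; exact Z.edge_mem (i + 3))
  have hca : c ≠ a := by
    intro h
    rw [h, ← hfi2] at hfc
    exact Z.face_ne_succ (i + 2) (by rw [e23, hfc])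
  have he4 : Z.edge (i + 4) = B.ae c (k + 3) := by
    have hm := Z.edge_succ_mem (i + 3)
    rw [e34, hfc, B.mem_sides] at hm
    rcases hm with h | h | h
    · exfalso
      have hne := Z.edge_ne_succ (i + 3)
      rw [e34, hb3, h] at hne
      exact hne rfl
    · exact (not_shared (by ring : i + 2 + 2 = i + 4) (B.base (k + 2))
        (by rw [ha2]; exact base_mem_ae a (k + 2)) (by rw [h]; exact base_mem_ae c (k + 2))).elim
    · rw [h]; congr 1; ring
  refine ⟨ha2, hb3, ?_⟩
  rw [he4, fin2_eq_one_sub c a hca]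

lemma stepB {i : ℤ} {k : ZMod n} {a : Fin 2}
    (h0 : Z.edge i = B.be k) (h1 : Z.edge (i + 1) = B.ae a (k + 1)) :
    Z.edge (i - 3) = B.be (k - 2) ∧ Z.edge (i - 2) = B.ae (1 - a) (k - 1) ∧
      Z.edge (i - 1) = B.ae (1 - a) k := by
  have em1 : i - 1 + 1 = i := by ring
  have em2 : i - 2 + 1 = i - 1 := by ring
  have em3 : i - 3 + 1 = i - 2 := by ring
  have hfi : Z.face i = B.fc a k := face_at h3 h0 h1
  obtain ⟨b, hfb⟩ := B.face_of_be (show B.be k ∈ T.sides (Z.face (i - 1)) by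
    have hm := Z.edge_succ_mem (i - 1)
    rw [em1, h0] at hm
    exact hm)
  have hba : b ≠ a := by
    intro h
    rw [h, ← hfi] at hfb
    have := Z.face_ne_succ (i - 1)
    rw [em1, hfb] at this
    exact this rfl
  have he1 : Z.edge (i - 1) = B.ae b k := by
    have hm := Z.edge_mem (i - 1)
    rw [hfb, B.mem_sides] at hm
    rcases hm with h | h | h
    · exfalso
      have hne := Z.edge_ne_succ (i - 1)
      rw [em1, h0, h] at hne
      exact hne rfl
    · exact h
    · exact (not_shared (by ring : i - 1 + 2 = i + 1) (B.base (k + 1))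
        (by rw [h]; exact base_mem_ae b (k + 1)) (by rw [h1]; exact base_mem_ae a (k + 1))).elim
  have hf2 : Z.face (i - 2) = B.fc b (k - 1) := by
    have hm := Z.edge_succ_mem (i - 2)
    rw [em2, he1] at hm
    rcases B.face_of_ae hm with h | h
    · exfalso
      rw [← hfb] at h
      have := Z.face_ne_succ (i - 2)
      rw [em2, h] at this
      exact this rfl
    · exact h
  have he2 : Z.edge (i - 2) = B.ae b (k - 1) := by
    have hm := Z.edge_mem (i - 2)
    rw [hf2, B.mem_sides] at hm
    rcases hm with h | h | h
    · refine (not_shared (by ring : i - 2 + 2 = i) (B.base k) ?_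
        (by rw [h0]; exact base_mem_be_left k)).elim
      have hb := base_mem_be_right (B := B) (k - 1)
      have hk : k - 1 + 1 = k := by ring
      rw [hk] at hb
      rw [h]
      exact hb
    · exact h
    · exfalso
      have hk : k - 1 + 1 = k := by ring
      rw [hk] at h
      have hne := Z.edge_ne_succ (i - 2)
      rw [em2, he1, h] at hne
      exact hne rfl
  have hf3 : Z.face (i - 3) = B.fc b (k - 2) := by
    have hm := Z.edge_succ_mem (i - 3)
    rw [em3, he2] at hm
    rcases B.face_of_ae hm with h | h
    · exfalso
      rw [← hf2] at h
      have := Z.face_ne_succ (i - 3)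
      rw [em3, h] at this
      exact this rfl
    · have hk : k - 1 - 1 = k - 2 := by ring
      rw [hk] at h
      exact h
  have he3 : Z.edge (i - 3) = B.be (k - 2) := by
    have hm := Z.edge_mem (i - 3)
    rw [hf3, B.mem_sides] at hm
    rcases hm with h | h | h
    · exact h
    · exact (not_shared (by ring : i - 3 + 2 = i - 1) (B.apex b)
        (by rw [h]; exact apex_mem_ae b (k - 2)) (by rw [he1]; exact apex_mem_ae b k)).elim
    · exfalso
      have hk : k - 2 + 1 = k - 1 := by ring
      rw [hk] at h
      have hne := Z.edge_ne_succ (i - 3)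
      rw [em3, he2, h] at hne
      exact hne rfl
  have hb : b = 1 - a := fin2_eq_one_sub b a hba
  rw [hb] at he1 he2
  exact ⟨he3, he2, he1⟩

end Forcing
def aseq (a : Fin 2) (m : ℤ) : Fin 2 := if Even m then a else 1 - a

lemma aseq_succ (a : Fin 2) (m : ℤ) : aseq a (m + 1) = 1 - aseq a m := by
  unfold aseq
  by_cases h : Even m
  · rw [if_pos h, if_neg (by simpa [Int.even_add_one] using h)]
  · rw [if_neg h, if_pos (by simpa [Int.even_add_one] using h), fin2_sub_sub]

lemma aseq_pred (a : Fin 2) (m : ℤ) : aseq a (m - 1) = 1 - aseq a m := by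
  unfold aseq
  by_cases h : Even m
  · rw [if_pos h, if_neg (by simpa [Int.even_sub_one] using h)]
  · rw [if_neg h, if_pos (by simpa [Int.even_sub_one] using h), fin2_sub_sub]

section Model
variable {T : Triang} {n : ℕ} {B : Bipyramid T n} {Z : Zigzag T}
variable (h3 : 3 ≤ n)
include h3

lemma base_ne {i j : ZMod n} (h : i ≠ j) : B.base i ≠ B.base j :=
  fun hh => h (B.base_inj hh)

omit h3 in
lemma base_ne_apex (i : ZMod n) (a : Fin 2) : B.base i ≠ B.apex a :=
  fun h => B.apex_ne_base a i h.symm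

lemma model {i0 : ℤ} {k0 : ZMod n} {a0 : Fin 2}
    (h0 : Z.edge i0 = B.be k0) (h1 : Z.edge (i0 + 1) = B.ae a0 (k0 + 1)) :
    ∀ m : ℤ, Z.edge (i0 + 3 * m) = B.be (k0 + ((2 * m : ℤ) : ZMod n)) ∧
      Z.edge (i0 + 3 * m + 1) = B.ae (aseq a0 m) (k0 + ((2 * m : ℤ) : ZMod n) + 1) ∧
      Z.edge (i0 + 3 * m + 2) = B.ae (aseq a0 m) (k0 + ((2 * m : ℤ) : ZMod n) + 2) := by
  have P : ∀ m : ℤ, Z.edge (i0 + 3 * m) = B.be (k0 + ((2 * m : ℤ) : ZMod n)) ∧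
      Z.edge (i0 + 3 * m + 1) = B.ae (aseq a0 m) (k0 + ((2 * m : ℤ) : ZMod n) + 1) := by
    intro m
    induction m using Int.induction_on with
    | zero =>
      constructor
      · have e : i0 + 3 * (0 : ℤ) = i0 := by ring
        rw [e]
        have e2 : k0 + ((2 * (0 : ℤ) : ℤ) : ZMod n) = k0 := by push_cast; ring
        rw [e2, h0]
      · have e : i0 + 3 * (0 : ℤ) + 1 = i0 + 1 := by ring
        rw [e]
        have e2 : k0 + ((2 * (0 : ℤ) : ℤ) : ZMod n) + 1 = k0 + 1 := by push_cast; ring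
        rw [e2]
        have e3 : aseq a0 0 = a0 := by simp [aseq]
        rw [e3, h1]
    | succ m ih =>
      obtain ⟨ihA, ihB⟩ := ih
      obtain ⟨_, hb3, he4⟩ := stepF h3 ihA ihB
      constructor
      · have e : i0 + 3 * ((m : ℤ) + 1) = i0 + 3 * (m : ℤ) + 3 := by ring
        rw [e]
        have e2 : k0 + ((2 * ((m : ℤ) + 1) : ℤ) : ZMod n)
            = k0 + ((2 * (m : ℤ) : ℤ) : ZMod n) + 2 := by push_cast; ring
        rw [e2, hb3]
      · have e : i0 + 3 * ((m : ℤ) + 1) + 1 = i0 + 3 * (m : ℤ) + 4 := by ring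
        rw [e]
        have e2 : k0 + ((2 * ((m : ℤ) + 1) : ℤ) : ZMod n) + 1
            = k0 + ((2 * (m : ℤ) : ℤ) : ZMod n) + 3 := by push_cast; ring
        rw [e2, aseq_succ, he4]
    | pred m ih =>
      obtain ⟨ihA, ihB⟩ := ih
      obtain ⟨hb3, he2, _⟩ := stepB h3 ihA ihB
      constructor
      · have e : i0 + 3 * (-(m : ℤ) - 1) = i0 + 3 * (-(m : ℤ)) - 3 := by ring
        rw [e]
        have e2 : k0 + ((2 * (-(m : ℤ) - 1) : ℤ) : ZMod n)
            = k0 + ((2 * (-(m : ℤ)) : ℤ) : ZMod n) - 2 := by push_cast; ring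
        rw [e2, hb3]
      · have e : i0 + 3 * (-(m : ℤ) - 1) + 1 = i0 + 3 * (-(m : ℤ)) - 2 := by ring
        rw [e]
        have e2 : k0 + ((2 * (-(m : ℤ) - 1) : ℤ) : ZMod n) + 1
            = k0 + ((2 * (-(m : ℤ)) : ℤ) : ZMod n) - 1 := by push_cast; ring
        rw [e2]
        have e3 : aseq a0 (-(m : ℤ) - 1) = 1 - aseq a0 (-(m : ℤ)) := aseq_pred a0 (-(m : ℤ))
        rw [e3, he2]
  intro m
  obtain ⟨hA, hB⟩ := P m
  exact ⟨hA, hB, (stepF h3 hA hB).1⟩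

lemma model_dir {i0 : ℤ} {k0 : ZMod n} {a0 : Fin 2}
    (h0 : Z.edge i0 = B.be k0) (h1 : Z.edge (i0 + 1) = B.ae a0 (k0 + 1)) (m : ℤ) :
    Z.tail (i0 + 3 * m) = B.base (k0 + ((2 * m : ℤ) : ZMod n)) ∧
    Z.head (i0 + 3 * m) = B.base (k0 + ((2 * m : ℤ) : ZMod n) + 1) ∧
    Z.tail (i0 + 3 * m + 1) = B.base (k0 + ((2 * m : ℤ) : ZMod n) + 1) ∧
    Z.head (i0 + 3 * m + 1) = B.apex (aseq a0 m) ∧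
    Z.tail (i0 + 3 * m + 2) = B.apex (aseq a0 m) ∧
    Z.head (i0 + 3 * m + 2) = B.base (k0 + ((2 * m : ℤ) : ZMod n) + 2) := by
  haveI : Fact (1 < n) := ⟨by omega⟩
  set κ : ZMod n := k0 + ((2 * m : ℤ) : ZMod n) with hκ
  set α : Fin 2 := aseq a0 m with hα
  obtain ⟨hA, hB, hC⟩ := model h3 h0 h1 m
  have hk01 : κ ≠ κ + 1 := fun h => (zm1 h3) (by linear_combination -h)
  have hk12 : κ + 1 ≠ κ + 2 := fun h => (zm1 h3) (by linear_combination -h)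
  have d1 : Z.tail (i0 + 3 * m) = B.base κ ∧ Z.head (i0 + 3 * m) = B.base (κ + 1) := by
    apply head_tail Z (base_ne h3 hk01)
    · rw [hA, B.ends_be]
    · rw [hB, B.ends_ae]
      exact Finset.mem_insert_of_mem (Finset.mem_singleton.2 rfl)
    · rw [hB, B.ends_ae]
      simp only [Finset.mem_insert, Finset.mem_singleton, not_or]
      exact ⟨base_ne_apex κ α, base_ne h3 hk01⟩
  have d2 : Z.tail (i0 + 3 * m + 1) = B.base (κ + 1) ∧
      Z.head (i0 + 3 * m + 1) = B.apex α := by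
    apply head_tail Z (base_ne_apex (κ + 1) α)
    · rw [hB, B.ends_ae, Finset.pair_comm]
    · have e : i0 + 3 * m + 1 + 1 = i0 + 3 * m + 2 := by ring
      rw [e, hC, B.ends_ae]
      exact Finset.mem_insert_self _ _
    · have e : i0 + 3 * m + 1 + 1 = i0 + 3 * m + 2 := by ring
      rw [e, hC, B.ends_ae]
      simp only [Finset.mem_insert, Finset.mem_singleton, not_or]
      exact ⟨base_ne_apex (κ + 1) α, base_ne h3 hk12⟩
  have hnext : Z.edge (i0 + 3 * m + 2 + 1) = B.be (κ + 2) := by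
    have e : i0 + 3 * m + 2 + 1 = i0 + 3 * (m + 1) := by ring
    rw [e, (model h3 h0 h1 (m + 1)).1]
    congr 1
    rw [hκ]
    push_cast
    ring
  have d3 : Z.tail (i0 + 3 * m + 2) = B.apex α ∧
      Z.head (i0 + 3 * m + 2) = B.base (κ + 2) := by
    apply head_tail Z (B.apex_ne_base α (κ + 2))
    · rw [hC, B.ends_ae]
    · rw [hnext, B.ends_be]
      exact Finset.mem_insert_self _ _
    · rw [hnext, B.ends_be]
      simp only [Finset.mem_insert, Finset.mem_singleton, not_or]
      exact ⟨B.apex_ne_base α (κ + 2), B.apex_ne_base α (κ + 2 + 1)⟩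
  exact ⟨d1.1, d1.2, d2.1, d2.2, d3.1, d3.2⟩

end Model
section Period
variable {T : Triang} {n : ℕ} {B : Bipyramid T n} {Z : Zigzag T}
variable (hn : Odd n) (h3 : 3 ≤ n)
include hn h3

lemma period_6n {i0 : ℤ} {k0 : ZMod n} {a0 : Fin 2}
    (h0 : Z.edge i0 = B.be k0) (h1 : Z.edge (i0 + 1) = B.ae a0 (k0 + 1)) :
    Z.n = 6 * n := by
  have hM := model h3 h0 h1
  have h2n : Even ((2 * (n : ℤ))) := even_two_mul _
  -- upper bound via minimality
  have hper : ∀ j : ℤ, Z.edge (j + ((6 * n : ℕ) : ℤ)) = Z.edge j := by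
    intro j
    obtain ⟨m, r, hr, rfl⟩ : ∃ m r : ℤ, (r = 0 ∨ r = 1 ∨ r = 2) ∧ j = i0 + 3 * m + r :=
      ⟨(j - i0) / 3, (j - i0) % 3, by omega, by omega⟩
    have e : i0 + 3 * m + r + ((6 * n : ℕ) : ℤ) = i0 + 3 * (m + 2 * n) + r := by
      push_cast; ring
    rw [e]
    have hk : k0 + ((2 * (m + 2 * (n : ℤ)) : ℤ) : ZMod n) = k0 + ((2 * m : ℤ) : ZMod n) := by
      push_cast
      rw [ZMod.natCast_self]
      ring
    have hpar : Even (m + 2 * (n : ℤ)) ↔ Even m := by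
      rw [Int.even_add]
      simp [h2n]
    have ha : aseq a0 (m + 2 * (n : ℤ)) = aseq a0 m := by
      simp only [aseq, hpar]
    rcases hr with rfl | rfl | rfl
    · rw [add_zero, add_zero, (hM (m + 2 * n)).1, (hM m).1, hk]
    · rw [(hM (m + 2 * n)).2.1, (hM m).2.1, hk, ha]
    · rw [(hM (m + 2 * n)).2.2, (hM m).2.2, hk, ha]
  have hle : Z.n ≤ 6 * n := Z.minimal (6 * n) (by omega) hper
  -- lower bound
  obtain ⟨q, r, hr, hN⟩ : ∃ q r : ℤ, (r = 0 ∨ r = 1 ∨ r = 2) ∧ (Z.n : ℤ) = 3 * q + r :=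
    ⟨((Z.n : ℤ)) / 3, ((Z.n : ℤ)) % 3, by omega, by omega⟩
  have hNpos := Z.npos
  have hq0 : 0 ≤ q := by omega
  have hperN := Z.per_edge i0
  rw [h0] at hperN
  rcases hr with rfl | rfl | rfl
  · -- r = 0 : the genuine case
    have e : i0 + (Z.n : ℤ) = i0 + 3 * q := by omega
    rw [e, (hM q).1] at hperN
    have hk : ((2 * q : ℤ) : ZMod n) = 0 := by
      have := B.be_injective hperN
      linear_combination this
    have hdvd : (n : ℤ) ∣ 2 * q := (ZMod.intCast_zmod_eq_zero_iff_dvd _ _).1 hk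
    -- parity of q
    have hperN1 := Z.per_edge (i0 + 1)
    rw [h1] at hperN1
    have e1 : i0 + 1 + (Z.n : ℤ) = i0 + 3 * q + 1 := by omega
    rw [e1, (hM q).2.1] at hperN1
    have haq : aseq a0 q = a0 := (B.ae_inj hperN1).1
    have hqe : Even q := by
      by_contra hodd
      rw [aseq, if_neg hodd] at haq
      exact fin2_one_sub_ne a0 haq
    -- pass to ℕ
    set q' : ℕ := q.toNat with hq'
    have hcq : (q' : ℤ) = q := Int.toNat_of_nonneg hq0
    have hdvd' : n ∣ 2 * q' := by
      have : ((n : ℤ)) ∣ ((2 * q' : ℕ) : ℤ) := by push_cast; rw [hcq]; exact hdvd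
      exact_mod_cast this
    have hcop : Nat.Coprime n 2 := Nat.coprime_two_right.2 hn
    have hnq : n ∣ q' := (Nat.Coprime.dvd_of_dvd_mul_left hcop) hdvd'
    have h2q : 2 ∣ q' := by
      obtain ⟨t, ht⟩ := hqe
      refine ⟨t.toNat, ?_⟩
      omega
    have h2nq : 2 * n ∣ q' := Nat.Coprime.mul_dvd_of_dvd_of_dvd (by
        rw [Nat.coprime_comm]; exact hcop) h2q hnq
    have hq'pos : 0 < q' := by omega
    have : 2 * n ≤ q' := Nat.le_of_dvd hq'pos h2nq
    omega
  · exfalso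
    have e : i0 + (Z.n : ℤ) = i0 + 3 * q + 1 := by omega
    rw [e, (hM q).2.1] at hperN
    exact B.be_ne_ae _ _ _ hperN.symm
  · exfalso
    have e : i0 + (Z.n : ℤ) = i0 + 3 * q + 2 := by omega
    rw [e, (hM q).2.2] at hperN
    exact B.be_ne_ae _ _ _ hperN.symm

lemma solve_par (c : ZMod n) (b : Bool) :
    ∃ m : ℤ, ((2 * m : ℤ) : ZMod n) = c ∧ (Even m ↔ b = true) := by
  haveI : NeZero n := ⟨by omega⟩
  obtain ⟨h, hnh⟩ := hn
  have hz : ((n : ℕ) : ZMod n) = 0 := ZMod.natCast_self n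
  have hsol : ∀ m0 : ℤ, ((2 * (m0 + n) : ℤ) : ZMod n) = ((2 * m0 : ℤ) : ZMod n) := by
    intro m0
    push_cast
    rw [hz]
    ring
  set m0 : ℤ := (c.val : ℤ) * (h + 1) with hm0
  have hbase : ((2 * m0 : ℤ) : ZMod n) = c := by
    have hv : ((c.val : ℕ) : ZMod n) = c := by
      simp [ZMod.natCast_val, ZMod.cast_id]
    have hz' : (2 * (h : ZMod n) + 1) = 0 := by
      have h2 : (((2 * h + 1 : ℕ)) : ZMod n) = 0 := by rw [← hnh]; exact hz
      push_cast at h2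
      linear_combination h2
    rw [hm0]
    push_cast
    rw [hv]
    linear_combination c * hz'
  have hodd_n : ¬ Even (n : ℤ) := by
    rw [Int.even_coe_nat]
    intro he
    obtain ⟨t, ht⟩ := he
    omega
  by_cases hp : Even m0 ↔ b = true
  · exact ⟨m0, hbase, hp⟩
  · refine ⟨m0 + n, (hsol m0).trans hbase, ?_⟩
    have : Even (m0 + n) ↔ ¬ Even m0 := by
      rw [Int.even_add]
      tauto
    rw [this]
    tauto

end Period
section EdgeTypes
variable {T : Triang} {n : ℕ} {B : Bipyramid T n} {Z : Zigzag T}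
variable (hn : Odd n) (h3 : 3 ≤ n)
include hn h3

lemma edge_types (τ : ZOrientation T) (hZ : Z ∈ τ.zz)
    {i0 : ℤ} {k0 : ZMod n} {a0 : Fin 2}
    (h0 : Z.edge i0 = B.be k0) (h1 : Z.edge (i0 + 1) = B.ae a0 (k0 + 1)) :
    (∀ (a : Fin 2) (j : ZMod n), τ.TypeI (B.ae a j)) ∧
      (∀ k : ZMod n, τ.TypeII (B.be k)) := by
  have hM := model h3 h0 h1
  have hD := model_dir h3 h0 h1
  have hN := period_6n hn h3 h0 h1
  have hshift : ∀ m : ℤ, ((2 * (m + (n : ℤ)) : ℤ) : ZMod n) = ((2 * m : ℤ) : ZMod n) := by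
    intro m
    push_cast
    rw [ZMod.natCast_self]
    ring
  constructor
  · -- lateral edges are of type I
    intro a j
    obtain ⟨m, hm, hpar⟩ := solve_par hn h3 (j - 1 - k0) (decide (a = a0))
    obtain ⟨m', hm', hpar'⟩ := solve_par hn h3 (j - 2 - k0) (decide (a = a0))
    have haseq : aseq a0 m = a := by
      by_cases hcase : a = a0
      · have : Even m := hpar.2 (decide_eq_true hcase)
        rw [aseq, if_pos this, hcase]
      · have : ¬ Even m := fun he => hcase (of_decide_eq_true (hpar.1 he))
        rw [aseq, if_neg this]
        exact (fin2_eq_one_sub a a0 hcase).symm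
    have haseq' : aseq a0 m' = a := by
      by_cases hcase : a = a0
      · have : Even m' := hpar'.2 (decide_eq_true hcase)
        rw [aseq, if_pos this, hcase]
      · have : ¬ Even m' := fun he => hcase (of_decide_eq_true (hpar'.1 he))
        rw [aseq, if_neg this]
        exact (fin2_eq_one_sub a a0 hcase).symm
    have hk : k0 + ((2 * m : ℤ) : ZMod n) + 1 = j := by rw [hm]; ring
    have hk' : k0 + ((2 * m' : ℤ) : ZMod n) + 2 = j := by rw [hm']; ring
    set j1 : ℤ := i0 + 3 * m + 1 with hj1
    set j2 : ℤ := i0 + 3 * m' + 2 with hj2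
    have he1 : Z.edge j1 = B.ae a j := by rw [hj1, (hM m).2.1, haseq, hk]
    have he2 : Z.edge j2 = B.ae a j := by rw [hj2, (hM m').2.2, haseq', hk']
    have hjj : j1 % (Z.n : ℤ) ≠ j2 % (Z.n : ℤ) := by
      intro h
      have hd : (Z.n : ℤ) ∣ j2 - j1 := Int.ModEq.dvd h
      rw [hN] at hd
      have h3d : (3 : ℤ) ∣ j2 - j1 := dvd_trans ⟨2 * n, by push_cast; ring⟩ hd
      have : j2 - j1 = 3 * (m' - m) + 1 := by rw [hj1, hj2]; ring
      omega
    have teq := travs_eq τ hZ (B.ae a j) j1 j2 hjj he1 he2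
    refine ⟨B.base j, B.apex a, ?_, base_ne_apex j a⟩
    rw [teq]
    have d1 := hD m
    have d2 := hD m'
    rw [hj1, hj2, d1.2.2.1, d1.2.2.2.1, d2.2.2.2.2.1, d2.2.2.2.2.2, haseq, haseq', hk, hk']
  · -- base edges are of type II
    intro k
    obtain ⟨m, hm, -⟩ := solve_par hn h3 (k - k0) true
    have hk : k0 + ((2 * m : ℤ) : ZMod n) = k := by rw [hm]; ring
    have hk2 : k0 + ((2 * (m + (n : ℤ)) : ℤ) : ZMod n) = k := by rw [hshift]; exact hk
    set j1 : ℤ := i0 + 3 * m with hj1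
    set j2 : ℤ := i0 + 3 * (m + (n : ℤ)) with hj2
    have he1 : Z.edge j1 = B.be k := by rw [hj1, (hM m).1, hk]
    have he2 : Z.edge j2 = B.be k := by rw [hj2, (hM (m + (n : ℤ))).1, hk2]
    have hjj : j1 % (Z.n : ℤ) ≠ j2 % (Z.n : ℤ) := by
      intro h
      have hd : (Z.n : ℤ) ∣ j2 - j1 := Int.ModEq.dvd h
      rw [hN] at hd
      have : j2 - j1 = 3 * n := by rw [hj1, hj2]; ring
      rw [this] at hd
      have hle := Int.le_of_dvd (by positivity) hd
      omega
    have teq := travs_eq τ hZ (B.be k) j1 j2 hjj he1 he2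
    refine ⟨B.base k, B.base (k + 1), ?_⟩
    rw [teq]
    have d1 := hD m
    have d2 := hD (m + (n : ℤ))
    rw [hj1, hj2, d1.1, d1.2.1, d2.1, d2.2.1, hk, hk2]
end EdgeTypes
section Start
variable {T : Triang} {n : ℕ} {B : Bipyramid T n} {Z : Zigzag T}

lemma after_be {i : ℤ} {k : ZMod n} (h : Z.edge i = B.be k) :
    ∃ a, Z.edge (i + 1) = B.ae a (k + 1) ∨ Z.edge (i + 1) = B.ae a k := by
  have hm := Z.edge_mem i
  rw [h] at hm
  obtain ⟨c, hc⟩ := B.face_of_be hm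
  have hm1 := Z.edge_succ_mem i
  rw [hc, B.mem_sides] at hm1
  rcases hm1 with h' | h' | h'
  · exfalso
    have hne := Z.edge_ne_succ i
    rw [h, h'] at hne
    exact hne rfl
  · exact ⟨c, Or.inr h'⟩
  · exact ⟨c, Or.inl h'⟩

lemma exists_be : ∃ (i : ℤ) (k : ZMod n), Z.edge i = B.be k := by
  rcases B.edge_surj (Z.edge 0) with ⟨k, hk⟩ | ⟨a, j, hj⟩
  · exact ⟨0, k, hk⟩
  rcases B.edge_surj (Z.edge 1) with ⟨k, hk⟩ | ⟨a', j', hj'⟩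
  · exact ⟨1, k, hk⟩
  obtain ⟨c, s, hcs⟩ := B.face_surj (Z.face 0)
  have hm0 := Z.edge_mem 0
  have hm1 : Z.edge 1 ∈ T.sides (Z.face 0) := by
    have := Z.edge_succ_mem 0
    norm_num at this
    exact this
  have hfne : Z.face 0 ≠ Z.face 1 := by
    have := Z.face_ne_succ 0
    norm_num at this
    exact this
  have hne01 : Z.edge 0 ≠ Z.edge 1 := by
    have := Z.edge_ne_succ 0
    norm_num at this
    exact this
  have hm2 : Z.edge 2 ∈ T.sides (Z.face 1) := by
    have := Z.edge_succ_mem 1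
    norm_num at this
    exact this
  have hne12 : Z.edge 1 ≠ Z.edge 2 := by
    have := Z.edge_ne_succ 1
    norm_num at this
    exact this
  have hsh : ∀ v : T.V, v ∈ T.ends (Z.edge 0) → v ∈ T.ends (Z.edge 2) → False := by
    intro v hv1 hv2
    exact not_shared (by norm_num : (0 : ℤ) + 2 = 2) v hv1 hv2
  rw [hcs, B.mem_sides] at hm0 hm1
  have hmm1 := Z.edge_mem 1
  rcases hm0 with h | h | h
  · exact absurd (hj ▸ h).symm (B.be_ne_ae _ _ _)
  all_goals rcases hm1 with h' | h' | h'
  · exact absurd (hj' ▸ h').symm (B.be_ne_ae _ _ _)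
  · exact absurd (h.trans h'.symm) hne01
  · -- Case A : edge0 = ae c s, edge1 = ae c (s+1)
    have hface1 : Z.face 1 = B.fc c (s + 1) := by
      rw [h'] at hmm1
      rcases B.face_of_ae hmm1 with hf | hf
      · exact hf
      · exfalso
        have he : s + 1 - 1 = s := by ring
        rw [he, ← hcs] at hf
        exact hfne hf.symm
    rw [hface1, B.mem_sides] at hm2
    rcases hm2 with h2 | h2 | h2
    · exact ⟨2, s + 1, h2⟩
    · exact absurd (h'.trans h2.symm) hne12
    · exfalso
      exact hsh (B.apex c) (by rw [h]; exact apex_mem_ae c s)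
        (by rw [h2]; exact apex_mem_ae c (s + 1 + 1))
  · exact absurd (hj' ▸ h').symm (B.be_ne_ae _ _ _)
  · -- Case B : edge0 = ae c (s+1), edge1 = ae c s
    have hface1 : Z.face 1 = B.fc c (s - 1) := by
      rw [h'] at hmm1
      rcases B.face_of_ae hmm1 with hf | hf
      · exfalso
        rw [← hcs] at hf
        exact hfne hf.symm
      · exact hf
    rw [hface1, B.mem_sides] at hm2
    rcases hm2 with h2 | h2 | h2
    · exact ⟨2, s - 1, h2⟩
    · exfalso
      exact hsh (B.apex c) (by rw [h]; exact apex_mem_ae c (s + 1))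
        (by rw [h2]; exact apex_mem_ae c (s - 1))
    · exfalso
      have he : s - 1 + 1 = s := by ring
      rw [he] at h2
      exact hne12 (h'.trans h2.symm)
  · exact absurd (h.trans h'.symm) hne01

lemma derive_all (τ : ZOrientation T)
    (hae : ∀ (a : Fin 2) (i : ZMod n), τ.TypeI (B.ae a i))
    (hbe : ∀ i : ZMod n, τ.TypeII (B.be i)) :
    (∀ (a : Fin 2) (i : ZMod n), τ.TypeI (B.ae a i)) ∧
    (∀ i : ZMod n, τ.TypeII (B.be i)) ∧
    (∀ a : Fin 2, τ.VertexTypeI (B.apex a)) ∧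
    (∀ i : ZMod n, ∃ e : T.E, B.base i ∈ T.ends e ∧ τ.TypeII e) ∧
    (∀ f : T.F, τ.FaceTypeI f) := by
  refine ⟨hae, hbe, ?_, ?_, ?_⟩
  · intro a e he
    rcases B.edge_surj e with ⟨i, rfl⟩ | ⟨b, i, rfl⟩
    · exfalso
      rw [B.ends_be] at he
      simp only [Finset.mem_insert, Finset.mem_singleton] at he
      rcases he with h | h
      · exact B.apex_ne_base a i h
      · exact B.apex_ne_base a (i + 1) h
    · exact hae b i
  · intro i
    exact ⟨B.be i, base_mem_be_left i, hbe i⟩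
  · intro f
    obtain ⟨a, i, rfl⟩ := B.face_surj f
    constructor
    · have hfilter : (T.sides (B.fc a i)).filter (fun e => τ.TypeII e) = {B.be i} := by
        ext e
        simp only [Finset.mem_filter, Finset.mem_singleton]
        constructor
        · rintro ⟨hmem, hII⟩
          rw [B.mem_sides] at hmem
          rcases hmem with rfl | rfl | rfl
          · rfl
          · exact (typeI_not_typeII (hae a i) hII).elim
          · exact (typeI_not_typeII (hae a (i + 1)) hII).elim
        · rintro rfl
          exact ⟨B.mem_sides.2 (Or.inl rfl), hbe i⟩
      rw [hfilter, Finset.card_singleton]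
    · intro e hmem
      rw [B.mem_sides] at hmem
      rcases hmem with rfl | rfl | rfl
      · exact Or.inr (hbe i)
      · exact Or.inl (hae a i)
      · exact Or.inl (hae a (i + 1))

end Start
/-- In `BP_n` with `n` odd, for any z-orientation: all apex-to-base edges are
of type I, all base edges are of type II, the apexes are vertices of type I,
all base vertices are of type II, and all faces are of type I. -/
theorem stmt_10 (T : Triang) (n : ℕ) (hn : Odd n) (h3 : 3 ≤ n)
    (B : Bipyramid T n) (τ : ZOrientation T) :
    (∀ (a : Fin 2) (i : ZMod n), τ.TypeI (B.ae a i)) ∧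
    (∀ i : ZMod n, τ.TypeII (B.be i)) ∧
    (∀ a : Fin 2, τ.VertexTypeI (B.apex a)) ∧
    (∀ i : ZMod n, ∃ e : T.E, B.base i ∈ T.ends e ∧ τ.TypeII e) ∧
    (∀ f : T.F, τ.FaceTypeI f) := by
  haveI : NeZero n := ⟨by omega⟩
  -- the list of zigzags is nonempty
  obtain ⟨Z, hZ⟩ : ∃ Z, Z ∈ τ.zz := by
    by_contra h
    push_neg at h
    have hnil : τ.zz = [] := List.eq_nil_iff_forall_not_mem.2 h
    have := τ.covers (B.be 0)
    rw [hnil] at this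
    simp at this
  obtain ⟨i, k, hbe0⟩ := exists_be (B := B) (Z := Z)
  obtain ⟨a, hcase⟩ := after_be hbe0
  rcases hcase with h1 | h1
  · obtain ⟨hae', hbe'⟩ := edge_types hn h3 τ hZ hbe0 h1
    exact derive_all τ hae' hbe'
  · -- reversed orientation : use the flipped bipyramid
    have hbe0' : Z.edge i = B.flip.be (-k - 1) := by rw [B.flip_be]; exact hbe0
    have h1' : Z.edge (i + 1) = B.flip.ae a (-k - 1 + 1) := by
      have he : -k - 1 + 1 = -k := by ring
      rw [he, B.flip_ae]
      exact h1
    obtain ⟨hae', hbe'⟩ := edge_types hn h3 τ hZ hbe0' h1'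
    have haeB : ∀ (a : Fin 2) (j : ZMod n), τ.TypeI (B.ae a j) := by
      intro a j
      have := hae' a (-j)
      rw [B.flip_ae] at this
      exact this
    have hbeB : ∀ j : ZMod n, τ.TypeII (B.be j) := by
      intro j
      have := hbe' (-j - 1)
      rw [B.flip_be] at this
      exact this
    exact derive_all τ haeB hbeB
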